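/- For every integer n ≥ 1, the function a ↦ (n!/πⁿ)(1 + ‖a‖²)^{−(n+1)} on ℂⁿ integrates to 1 with respect to Lebesgue measure; i.e., the Fubini–Study measure σ_n on ℂⁿ is a probability measure. -/

import Mathlib

open MeasureTheory
open scoped ENNReal Real

noncomputable instance (n : ℕ) : MeasurableSpace (EuclideanSpace ℂ (Fin n)) :=
  MeasurableSpace.comap WithLp.ofLp MeasurableSpace.pi
instance (n : ℕ) : BorelSpace (EuclideanSpace ℂ (Fin n)) := PiLp.borelSpace 2
noncomputable instance (n : ℕ) : MeasureSpace (EuclideanSpace ℂ (Fin n)) :=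
  ⟨Measure.map (WithLp.toLp 2) (Measure.pi fun _ => volume)⟩

/-- The Fubini–Study measure on `ℂⁿ`, with density `(n!/πⁿ)(1+‖a‖²)^{-(n+1)}` with
respect to Lebesgue measure. -/
noncomputable def fubiniStudyCn (n : ℕ) : Measure (EuclideanSpace ℂ (Fin n)) :=
  volume.withDensity fun a =>
    ENNReal.ofReal ((n.factorial : ℝ) / π ^ n * ((1 + ‖a‖ ^ 2) ^ (n + 1))⁻¹)

/-!
In polar coordinates on `ℂⁿ ≅ ℝ²ⁿ` the integral of `(1 + ‖a‖²)^{-(n+1)}` is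
`2n · vol(B) · ∫₀^∞ r^{2n-1} (1 + r²)^{-(n+1)} dr`, where `B` is the unit ball. The radial
integrand has the primitive `(r² / (1 + r²))ⁿ / (2n)`, so the radial integral is `1 / (2n)` and
the whole integral is `vol(B) = πⁿ / n!`.
-/

open Set Filter Topology Module Metric

theorem hasDerivAt_sq_div_one_add_sq_pow (k : ℕ) (y : ℝ) :
    HasDerivAt (fun y : ℝ => (y ^ 2 / (1 + y ^ 2)) ^ (k + 1) / (2 * ((k : ℝ) + 1)))
      (y ^ (2 * k + 1) * ((1 + y ^ 2) ^ (k + 2))⁻¹) y := by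
  have hy : (1 : ℝ) + y ^ 2 ≠ 0 := by positivity
  have hsq : HasDerivAt (fun y : ℝ => y ^ 2) (2 * y) y := by simpa using hasDerivAt_pow 2 y
  refine (((hsq.div (hsq.const_add 1) hy).pow (k + 1)).div_const
    (2 * ((k : ℝ) + 1))).congr_deriv ?_
  simp only [Pi.div_apply, Nat.add_sub_cancel, Nat.cast_add, Nat.cast_one, div_pow]
  field_simp
  ring

theorem tendsto_sq_div_one_add_sq_atTop :
    Tendsto (fun y : ℝ => y ^ 2 / (1 + y ^ 2)) atTop (𝓝 1) := by
  have h : Tendsto (fun y : ℝ => 1 - (1 + y ^ 2)⁻¹) atTop (𝓝 (1 - 0)) :=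
    tendsto_const_nhds.sub (tendsto_inv_atTop_zero.comp
      (tendsto_atTop_add_const_left _ 1 (tendsto_pow_atTop two_ne_zero)))
  rw [sub_zero] at h
  refine h.congr fun y => ?_
  have hy : (1 : ℝ) + y ^ 2 ≠ 0 := by positivity
  field_simp
  ring

theorem tendsto_sq_div_one_add_sq_pow_atTop (k : ℕ) :
    Tendsto (fun y : ℝ => (y ^ 2 / (1 + y ^ 2)) ^ (k + 1) / (2 * ((k : ℝ) + 1))) atTop
      (𝓝 (2 * ((k : ℝ) + 1))⁻¹) := by
  simpa using (tendsto_sq_div_one_add_sq_atTop.pow (k + 1)).div_const (2 * ((k : ℝ) + 1))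

theorem integrableOn_Ioi_pow_mul_inv_one_add_sq_pow (k : ℕ) :
    IntegrableOn (fun y : ℝ => y ^ (2 * k + 1) * ((1 + y ^ 2) ^ (k + 2))⁻¹) (Ioi 0) :=
  integrableOn_Ioi_deriv_of_nonneg' (fun y _ => hasDerivAt_sq_div_one_add_sq_pow k y)
    (fun y (hy : 0 < y) => by positivity) (tendsto_sq_div_one_add_sq_pow_atTop k)

theorem integral_Ioi_pow_mul_inv_one_add_sq_pow (k : ℕ) :
    ∫ y in Ioi (0 : ℝ), y ^ (2 * k + 1) * ((1 + y ^ 2) ^ (k + 2))⁻¹ = (2 * ((k : ℝ) + 1))⁻¹ := by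
  rw [integral_Ioi_of_hasDerivAt_of_nonneg' (fun y _ => hasDerivAt_sq_div_one_add_sq_pow k y)
    (fun y (hy : 0 < y) => by positivity) (tendsto_sq_div_one_add_sq_pow_atTop k)]
  simp

section EvenDimension

variable {E : Type*} [NormedAddCommGroup E] [NormedSpace ℝ E] [FiniteDimensional ℝ E]
  [MeasurableSpace E] [BorelSpace E] (μ : Measure E) [μ.IsAddHaarMeasure] {k : ℕ}

theorem integrable_inv_one_add_norm_sq_pow (hE : finrank ℝ E = 2 * (k + 1)) :
    Integrable (fun x : E => ((1 + ‖x‖ ^ 2) ^ (k + 2))⁻¹) μ := by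
  have : Nontrivial E := Module.nontrivial_of_finrank_pos (R := ℝ) (by omega)
  rw [integrable_fun_norm_addHaar μ (f := fun r : ℝ => ((1 + r ^ 2) ^ (k + 2))⁻¹), hE]
  exact integrableOn_Ioi_pow_mul_inv_one_add_sq_pow k

theorem integral_inv_one_add_norm_sq_pow_eq_measureReal_ball (hE : finrank ℝ E = 2 * (k + 1)) :
    ∫ x, ((1 + ‖x‖ ^ 2) ^ (k + 2))⁻¹ ∂μ = μ.real (ball 0 1) := by
  have : Nontrivial E := Module.nontrivial_of_finrank_pos (R := ℝ) (by omega)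
  rw [integral_fun_norm_addHaar μ (fun r : ℝ => ((1 + r ^ 2) ^ (k + 2))⁻¹), hE]
  simp only [smul_eq_mul, nsmul_eq_mul, show 2 * (k + 1) - 1 = 2 * k + 1 by omega,
    integral_Ioi_pow_mul_inv_one_add_sq_pow]
  field_simp
  push_cast
  ring

end EvenDimension

theorem isProbabilityMeasure_withDensity_ofReal {α : Type*} [MeasurableSpace α] {μ : Measure α}
    {f : α → ℝ} (hf : Integrable f μ) (hf_nonneg : 0 ≤ᵐ[μ] f) (h : ∫ x, f x ∂μ = 1) :
    IsProbabilityMeasure (μ.withDensity fun x => ENNReal.ofReal (f x)) := by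
  constructor
  rw [withDensity_apply _ MeasurableSet.univ, setLIntegral_univ,
    ← ofReal_integral_eq_lintegral_ofReal hf hf_nonneg, h, ENNReal.ofReal_one]

namespace EuclideanSpace

instance (n : ℕ) : (volume : Measure (EuclideanSpace ℂ (Fin n))).IsAddHaarMeasure :=
  (PiLp.continuousLinearEquiv 2 ℝ fun _ : Fin n => ℂ).symm.isAddHaarMeasure_map _

theorem finrank_real_complex (n : ℕ) :
    finrank ℝ (EuclideanSpace ℂ (Fin n)) = 2 * n := by
  rw [← Module.finrank_mul_finrank ℝ ℂ, Complex.finrank_real_complex, finrank_euclideanSpace,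
    Fintype.card_fin]

theorem measureReal_ball_zero_one_complex (n : ℕ) :
    volume.real (ball (0 : EuclideanSpace ℂ (Fin n)) 1) = π ^ n / n.factorial := by
  have hball : WithLp.toLp 2 ⁻¹' ball (0 : EuclideanSpace ℂ (Fin n)) 1 =
      {x : Fin n → ℂ | ∑ i, ‖x i‖ ^ (2 : ℝ) < 1} := by
    ext x
    simp [EuclideanSpace.norm_eq, Real.sqrt_lt' one_pos]
  have hvol : volume (ball (0 : EuclideanSpace ℂ (Fin n)) 1) =
      volume {x : Fin n → ℂ | ∑ i, ‖x i‖ ^ (2 : ℝ) < 1} := by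
    rw [← hball]
    exact Measure.map_apply (PiLp.continuous_toLp 2 _).measurable measurableSet_ball
  rw [measureReal_def, hvol, Complex.volume_sum_rpow_lt_one (Fin n) one_le_two,
    ENNReal.toReal_ofReal (by positivity), Fintype.card_fin, div_self two_ne_zero,
    one_add_one_eq_two, Real.Gamma_two, mul_one, mul_div_cancel_left₀ _ two_ne_zero,
    Real.Gamma_nat_eq_factorial]

end EuclideanSpace

/-- The Fubini–Study density on `ℂⁿ` integrates to `1`; i.e. the Fubini–Study measure is a
probability measure. -/
theorem fubiniStudy_isProbability (n : ℕ) (hn : 1 ≤ n) :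
    (∫ a : EuclideanSpace ℂ (Fin n),
        (n.factorial : ℝ) / π ^ n * ((1 + ‖a‖ ^ 2) ^ (n + 1))⁻¹ = 1) ∧
      IsProbabilityMeasure (fubiniStudyCn n) := by
  obtain ⟨k, rfl⟩ := Nat.exists_eq_add_of_le' hn
  have hE := EuclideanSpace.finrank_real_complex (k + 1)
  have hint : ∫ a : EuclideanSpace ℂ (Fin (k + 1)),
      ((k + 1).factorial : ℝ) / π ^ (k + 1) * ((1 + ‖a‖ ^ 2) ^ (k + 1 + 1))⁻¹ = 1 := by
    rw [integral_const_mul, integral_inv_one_add_norm_sq_pow_eq_measureReal_ball volume hE,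
      EuclideanSpace.measureReal_ball_zero_one_complex]
    field_simp
  exact ⟨hint, isProbabilityMeasure_withDensity_ofReal
    ((integrable_inv_one_add_norm_sq_pow volume hE).const_mul _)
    (.of_forall fun a => by positivity) hint⟩
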